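/- arXiv:0804.0637 — 2 statements merged into one kernel-verified Lean document; each statement's English description precedes it below -/
import Mathlib

section
/- Let L be a 24-dimensional odd unimodular lattice with even sublattice L₀ and shadow S = L₀* \ L. Let v ∈ L with (v,v) = 3. If there exist vectors a, b ∈ S such that (a,a) = (b,b) = 2, (a,b) = 1/2, and v = a − b, then v does not belong to any 3-frame of L. -/
open scoped BigOperators

namespace Ternary

/-- Hamming weight of a ternary vector. -/
def wt {n : ℕ} (x : Fin n → ZMod 3) : ℕ :=
  (Finset.filter (fun i => x i ≠ 0) Finset.univ).card

/-- Dual of a set of ternary vectors under the standard inner product. -/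
def dualCode {n : ℕ} (C : Set (Fin n → ZMod 3)) : Set (Fin n → ZMod 3) :=
  {x | ∀ y ∈ C, ∑ i, x i * y i = 0}

/-- A ternary self-dual code (self-duality forces linearity). -/
def IsSelfDual {n : ℕ} (C : Set (Fin n → ZMod 3)) : Prop :=
  dualCode C = C

/-- `C` has minimum weight `d`. -/
def HasMinWeight {n : ℕ} (C : Set (Fin n → ZMod 3)) (d : ℕ) : Prop :=
  (∃ x ∈ C, x ≠ 0 ∧ wt x = d) ∧ ∀ x ∈ C, x ≠ 0 → d ≤ wt x

/-- A monomial matrix: exactly one nonzero entry in each row and each column. -/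
def IsMonomial {n : ℕ} (P : Matrix (Fin n) (Fin n) (ZMod 3)) : Prop :=
  (∀ i, ∃! j, P i j ≠ 0) ∧ (∀ j, ∃! i, P i j ≠ 0)

/-- The code `C · P = {xP : x ∈ C}`. -/
def codeMul {n : ℕ} (C : Set (Fin n → ZMod 3)) (P : Matrix (Fin n) (Fin n) (ZMod 3)) :
    Set (Fin n → ZMod 3) :=
  (fun x => Matrix.vecMul x P) '' C

/-- Equivalence of ternary codes via monomial matrices. -/
def CodeEquiv {n : ℕ} (C C' : Set (Fin n → ZMod 3)) : Prop :=
  ∃ P, IsMonomial P ∧ C' = codeMul C P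

/-- Standard inner product on `ℝⁿ`. -/
noncomputable def ip {n : ℕ} (x y : Fin n → ℝ) : ℝ := ∑ i, x i * y i

/-- Construction A lattice `A₃(C) = (1/√3){x ∈ ℤⁿ : x mod 3 ∈ C}`. -/
def A3 {n : ℕ} (C : Set (Fin n → ZMod 3)) : Set (Fin n → ℝ) :=
  {v | ∃ y : Fin n → ℤ, (fun i => ((y i : ZMod 3))) ∈ C ∧
        v = fun i => (y i : ℝ) / Real.sqrt 3}

/-- The dual lattice (as a set): vectors with integral inner product with all of `L`. -/
def dualLattice {n : ℕ} (L : Set (Fin n → ℝ)) : Set (Fin n → ℝ) :=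
  {x | ∀ y ∈ L, ∃ m : ℤ, ip x y = (m : ℝ)}

/-- A 3-frame of `L`: vectors `f₁, …, fₙ ∈ L` with `(fᵢ, fⱼ) = 3δᵢⱼ`. -/
def IsFrame {n : ℕ} (L : Set (Fin n → ℝ)) (f : Fin n → Fin n → ℝ) : Prop :=
  (∀ i, f i ∈ L) ∧ ∀ i j, ip (f i) (f j) = if i = j then 3 else 0

/-- The map `π_F(x) = ((x,f₁) mod 3, …, (x,fₙ) mod 3)`, realized via `Int.floor`
(which agrees with `(x, fᵢ)` whenever that inner product is an integer). -/
noncomputable def piF {n : ℕ} (f : Fin n → Fin n → ℝ) (x : Fin n → ℝ) :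
    Fin n → ZMod 3 :=
  fun i => ((⌊ip x (f i)⌋ : ℤ) : ZMod 3)

/-- The even sublattice `B₃(C)` of `A₃(C)`. -/
def B3 {n : ℕ} (C : Set (Fin n → ZMod 3)) : Set (Fin n → ℝ) :=
  {v ∈ A3 C | ∃ m : ℤ, ip v v = 2 * (m : ℝ)}

/-- A decomposable code: a direct sum of two nonzero codes supported on
complementary sets of coordinates. -/
def IsDecomposableCode {n : ℕ} (C : Set (Fin n → ZMod 3)) : Prop :=
  ∃ S : Set (Fin n),
    (∃ x ∈ C, x ≠ 0 ∧ ∀ i ∉ S, x i = 0) ∧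
    (∃ x ∈ C, x ≠ 0 ∧ ∀ i ∈ S, x i = 0) ∧
    (∀ x ∈ C, S.indicator x ∈ C)

/-- A decomposable lattice: an orthogonal direct sum of two nonzero sublattices. -/
def IsDecomposableLattice {n : ℕ} (L : Set (Fin n → ℝ)) : Prop :=
  ∃ L₁ L₂ : Submodule ℤ (Fin n → ℝ),
    (L₁ : Set (Fin n → ℝ)) ⊆ L ∧ (L₂ : Set (Fin n → ℝ)) ⊆ L ∧
    (∃ x ∈ L₁, x ≠ (0 : Fin n → ℝ)) ∧ (∃ x ∈ L₂, x ≠ (0 : Fin n → ℝ)) ∧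
    (∀ a ∈ L₁, ∀ b ∈ L₂, ip a b = 0) ∧
    L = {x | ∃ a ∈ L₁, ∃ b ∈ L₂, x = a + b}

/-- The real all-ones vector. -/
def allOnesR (n : ℕ) : Fin n → ℝ := fun _ => 1

/-- The vector `e₁ = (√3, 0, …, 0)`. -/
noncomputable def e1 (n : ℕ) : Fin n → ℝ := fun i => if (i : ℕ) = 0 then Real.sqrt 3 else 0

/-- The straight construction `L_S(C) = ⟨(1/(2√3))𝟏, B₃(C)⟩`. -/
noncomputable def LS {n : ℕ} (C : Set (Fin n → ZMod 3)) : Set (Fin n → ℝ) :=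
  {x | ∃ (m : ℤ) (b : Fin n → ℝ), b ∈ B3 C ∧
        x = (m : ℝ) • ((2 * Real.sqrt 3)⁻¹ • allOnesR n) + b}

/-- The twisted construction `L_T(C) = ⟨(1/(2√3))𝟏 - e₁, B₃(C)⟩`. -/
noncomputable def LT {n : ℕ} (C : Set (Fin n → ZMod 3)) : Set (Fin n → ℝ) :=
  {x | ∃ (m : ℤ) (b : Fin n → ℝ), b ∈ B3 C ∧
        x = (m : ℝ) • ((2 * Real.sqrt 3)⁻¹ • allOnesR n - e1 n) + b}


lemma ip_comm' {n : ℕ} (x y : Fin n → ℝ) : ip x y = ip y x :=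
  Finset.sum_congr rfl fun i _ => mul_comm _ _

lemma ip_sub_right' {n : ℕ} (x y z : Fin n → ℝ) : ip x (y - z) = ip x y - ip x z := by
  simp [ip, mul_sub, Finset.sum_sub_distrib]

lemma ip_add_right' {n : ℕ} (x y z : Fin n → ℝ) : ip x (y + z) = ip x y + ip x z := by
  simp [ip, mul_add, Finset.sum_add_distrib]

lemma ip_smul_right' {n : ℕ} (c : ℝ) (x y : Fin n → ℝ) : ip x (c • y) = c * ip x y := by
  simp [ip, Finset.mul_sum]; exact Finset.sum_congr rfl fun i _ => by ring

lemma ip_self_nonneg' {n : ℕ} (x : Fin n → ℝ) : 0 ≤ ip x x :=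
  Finset.sum_nonneg fun i _ => mul_self_nonneg _

lemma ip_sum_right' {n : ℕ} (x : Fin n → ℝ) (g : Fin n → Fin n → ℝ) :
    ip x (∑ j, g j) = ∑ j, ip x (g j) := by
  simp only [ip, Finset.sum_apply, Finset.mul_sum]
  exact Finset.sum_comm

lemma ip_zsmul2 {n : ℕ} (x y : Fin n → ℝ) : ip x ((2:ℤ) • y) = 2 * ip x y := by
  simp [ip, Finset.mul_sum]; exact Finset.sum_congr rfl fun i _ => by ring

lemma ip_expand_sub {n : ℕ} (x y : Fin n → ℝ) :
    ip (x - y) (x - y) = ip x x - 2 * ip x y + ip y y := by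
  rw [ip_sub_right', ip_comm' (x - y) x, ip_sub_right', ip_comm' (x - y) y, ip_sub_right']
  rw [ip_comm' y x]; ring

lemma ip_expand_add {n : ℕ} (x y : Fin n → ℝ) :
    ip (x + y) (x + y) = ip x x + 2 * ip x y + ip y y := by
  rw [ip_add_right', ip_comm' (x + y) x, ip_add_right', ip_comm' (x + y) y, ip_add_right']
  rw [ip_comm' y x]; ring

/-- Let `L` be a 24-dimensional odd unimodular lattice with even
sublattice `L₀` and shadow `S = L₀* \ L`. If `v ∈ L` has norm 3 and
`v = a - b` with `a, b ∈ S`, `(a,a) = (b,b) = 2`, `(a,b) = 1/2`, then `v`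
belongs to no 3-frame of `L`. -/
theorem shadow_excludes_frame_vector (L : Submodule ℤ (Fin 24 → ℝ))
    (hU : dualLattice (L : Set (Fin 24 → ℝ)) = (L : Set (Fin 24 → ℝ)))
    (hOdd : ∃ x ∈ L, ¬ ∃ m : ℤ, ip x x = 2 * (m : ℝ))
    (v : Fin 24 → ℝ) (hvL : v ∈ L) (hv3 : ip v v = 3)
    (a b : Fin 24 → ℝ)
    (ha : a ∈ dualLattice {x ∈ (L : Set (Fin 24 → ℝ)) | ∃ m : ℤ, ip x x = 2 * (m : ℝ)}
            \ (L : Set (Fin 24 → ℝ)))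
    (hb : b ∈ dualLattice {x ∈ (L : Set (Fin 24 → ℝ)) | ∃ m : ℤ, ip x x = 2 * (m : ℝ)}
            \ (L : Set (Fin 24 → ℝ)))
    (haa : ip a a = 2) (hbb : ip b b = 2) (hab : ip a b = 1 / 2)
    (hvab : v = a - b) :
    ¬ ∃ f : Fin 24 → Fin 24 → ℝ, IsFrame (L : Set (Fin 24 → ℝ)) f ∧ ∃ i, f i = v := by
  rintro ⟨f, ⟨hfL, hfip⟩, i₀, hfi₀⟩
  obtain ⟨haD, haL⟩ := ha
  -- unimodularity: all pairwise inner products of lattice vectors are integers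
  have hint : ∀ x ∈ L, ∀ y ∈ L, ∃ m : ℤ, ip x y = (m : ℝ) := by
    intro x hx y hy
    have hx' : x ∈ dualLattice (L : Set (Fin 24 → ℝ)) := by rw [hU]; exact hx
    exact hx' y hy
  -- key: inner products of `a` with frame vectors are half-odd-integers
  have key : ∀ j, ∃ m : ℤ, Odd m ∧ 2 * ip a (f j) = (m : ℝ) := by
    intro j
    have h2fE : ((2:ℤ) • f j) ∈
        {x ∈ (L : Set (Fin 24 → ℝ)) | ∃ m : ℤ, ip x x = 2 * (m : ℝ)} := by
      refine ⟨L.smul_mem _ (hfL j), 6, ?_⟩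
      rw [ip_zsmul2, ip_comm', ip_zsmul2, ip_comm', hfip j j]
      norm_num
    obtain ⟨m, hm⟩ := haD _ h2fE
    rw [ip_zsmul2] at hm
    refine ⟨m, ?_, hm⟩
    rcases Int.even_or_odd m with ⟨k, hk⟩ | ho
    · exfalso
      have haf : ip a (f j) = (k : ℝ) := by
        have : (m : ℝ) = 2 * (k : ℝ) := by rw [hk]; push_cast; ring
        linarith [hm, this]
      apply haL
      rw [← hU]
      intro y hy
      obtain ⟨ny, hny⟩ := hint y hy y hy
      rcases Int.even_or_odd ny with ⟨p, hp⟩ | ⟨p, hp⟩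
      · exact haD y ⟨hy, p, by rw [hny, hp]; push_cast; ring⟩
      · obtain ⟨q, hq⟩ := hint y hy (f j) (hfL j)
        have hyf : y + f j ∈ L := L.add_mem hy (hfL j)
        have hsum : ip (y + f j) (y + f j) = 2 * ((p + 2 + q : ℤ) : ℝ) := by
          rw [ip_expand_add, hny, hq, hfip j j, if_pos rfl, hp]; push_cast; ring
        obtain ⟨r, hr⟩ := haD (y + f j) ⟨hyf, _, hsum⟩
        refine ⟨r - k, ?_⟩
        rw [ip_add_right', haf] at hr
        push_cast; linarith
    · exact ho
  -- Bessel's inequality: ∑ (a, fⱼ)² ≤ 3 (a,a) = 6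
  set T : ℝ := ∑ j, (ip a (f j)) ^ 2 with hT
  have hT6 : T ≤ 6 := by
    set s : Fin 24 → ℝ := ∑ j, (ip a (f j) / 3) • f j with hs
    have h1 : ip a s = T / 3 := by
      rw [hs, ip_sum_right']
      rw [hT, Finset.sum_div]
      refine Finset.sum_congr rfl fun j _ => ?_
      rw [ip_smul_right']; ring
    have h2 : ip s s = T / 3 := by
      rw [hs, ip_sum_right']
      have : ∀ j, ip s (f j) = ip a (f j) / 3 * 3 := by
        intro j
        rw [ip_comm', hs, ip_sum_right']
        rw [Finset.sum_eq_single j]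
        · rw [ip_smul_right', hfip j j, if_pos rfl]
        · intro k _ hkj
          rw [ip_smul_right', ip_comm', hfip j k, if_neg (fun h => hkj h.symm), mul_zero]
        · intro h; exact absurd (Finset.mem_univ j) h
      calc ∑ j, ip s ((ip a (f j) / 3) • f j)
          = ∑ j, (ip a (f j) / 3) * (ip a (f j) / 3 * 3) := by
            refine Finset.sum_congr rfl fun j _ => ?_
            rw [ip_smul_right', this j]
        _ = (∑ j, (ip a (f j)) ^ 2) / 3 := by
            rw [Finset.sum_div]
            refine Finset.sum_congr rfl fun j _ => by ring
        _ = T / 3 := by rw [hT]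
    have h3 : 0 ≤ ip (a - s) (a - s) := ip_self_nonneg' _
    rw [ip_expand_sub, haa, h1, h2] at h3
    linarith
  -- lower bound: ∑ (a, fⱼ)² ≥ 9/4 + 23/4 = 8
  have hv : ip a (f i₀) = 3 / 2 := by
    rw [hfi₀, hvab, ip_sub_right', haa, hab]; norm_num
  have hsq : ∀ j, (1/4 : ℝ) ≤ (ip a (f j)) ^ 2 := by
    intro j
    obtain ⟨m, hmo, hm⟩ := key j
    have hm0 : m ≠ 0 := by rintro rfl; simp at hmo
    have h1 : (1 : ℤ) ≤ m ^ 2 := by nlinarith [Int.one_le_abs hm0, sq_abs m]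
    have h1R : (1 : ℝ) ≤ (m : ℝ) ^ 2 := by exact_mod_cast h1
    have : ip a (f j) = (m : ℝ) / 2 := by linarith
    rw [this]; rw [div_pow]; norm_num; linarith
  have hlow : (8 : ℝ) ≤ T := by
    have hsplit : T = (ip a (f i₀)) ^ 2 + ∑ j ∈ Finset.univ.erase i₀, (ip a (f j)) ^ 2 :=
      (Finset.add_sum_erase _ _ (Finset.mem_univ i₀)).symm
    have hcard : (Finset.univ.erase i₀).card = 23 := by
      rw [Finset.card_erase_of_mem (Finset.mem_univ i₀)]; simp
    have hrest : (23 : ℝ) * (1/4) ≤ ∑ j ∈ Finset.univ.erase i₀, (ip a (f j)) ^ 2 := by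
      have := Finset.card_nsmul_le_sum (Finset.univ.erase i₀)
        (fun j => (ip a (f j)) ^ 2) (1/4 : ℝ) (fun j _ => hsq j)
      rw [hcard] at this
      simpa [nsmul_eq_mul] using this
    rw [hsplit, hv]
    norm_num at hrest ⊢
    linarith
  linarith

end Ternary
end

section
/- Every ternary self-dual code C of length 24 satisfies β₂₄ = 48 − 21β₃ + β₆, where βᵢ denotes the number of codewords of weight i in C. Consequently, if C has no codeword of weight 24 (i.e., maximum weight less than 24), then C has minimum weight 3. -/
open scoped BigOperators

namespace Ternary

/-! Summing additive characters of `𝔽₃` over a code gives the MacWilliams identity: for a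
self-dual code `C` of length `n`, the weight enumerator `W(x, y) = ∑ βᵢ xⁿ⁻ⁱ yⁱ` satisfies
`W(x + 2y, x - y) = |C| W(x, y)`, and at `x = y = 1` this gives `|C|² = 3ⁿ`. Since `v · v ≡ wt v`
mod 3, every weight is divisible by 3, so for `n = 24` only `β₀ = 1, β₃, …, β₂₄` survive.
The MacWilliams identity at six points is then a linear system in these nine unknowns that forces
`β₂₄ = 48 - 21β₃ + β₆`. Without words of weight 24 this gives `21β₃ = 48 + β₆ > 0`, and no
nonzero weight lies below 3. -/

open Finset

theorem _root_.AddChar.map_sum_eq_prod {ι A M : Type*} [AddCommMonoid A] [CommMonoid M]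
    (ψ : AddChar A M) (s : Finset ι) (f : ι → A) :
    ψ (∑ i ∈ s, f i) = ∏ i ∈ s, ψ (f i) := by
  induction s using Finset.cons_induction with
  | empty => simp
  | cons a s ha ih => rw [sum_cons, prod_cons, AddChar.map_add_eq_mul, ih]

section

open scoped Classical

variable {n : ℕ}

lemma wt_eq_zero_iff {x : Fin n → ZMod 3} : wt x = 0 ↔ x = 0 := hammingNorm_eq_zero

lemma wt_le (x : Fin n → ZMod 3) : wt x ≤ n :=
  hammingNorm_le_card_fintype.trans_eq (Fintype.card_fin n)

lemma prod_ite_eq_zero_eq_pow_wt {M : Type*} [CommMonoid M] (x : Fin n → ZMod 3) (a b : M) :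
    ∏ i, (if x i = 0 then a else b) = a ^ (n - wt x) * b ^ wt x := by
  have hcard : #{i | x i = 0} + wt x = n := by
    simpa [wt] using card_filter_add_card_filter_not (s := univ) (fun i => x i = 0)
  rw [prod_ite, prod_const, prod_const]
  congr 2
  omega

lemma three_dvd_wt_iff {x : Fin n → ZMod 3} : 3 ∣ wt x ↔ x ⬝ᵥ x = 0 := by
  have hsq : ∀ a : ZMod 3, a * a = if a = 0 then 0 else 1 := by decide
  have hwt : (wt x : ZMod 3) = x ⬝ᵥ x := by
    simp only [dotProduct, hsq, sum_ite, sum_const_zero, sum_const, zero_add, nsmul_eq_mul,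
      mul_one]
    rfl
  rw [← hwt, ZMod.natCast_eq_zero_iff]

lemma sum_stdAddChar_mul_ite (m : ZMod 3) (x y : ℂ) :
    ∑ c : ZMod 3, ZMod.stdAddChar (c * m) * (if c = 0 then x else y)
      = if m = 0 then x + 2 * y else x - y := by
  have hsplit : ∀ c : ZMod 3, ZMod.stdAddChar (c * m) * (if c = 0 then x else y)
      = y * ZMod.stdAddChar (c * m) + if c = 0 then x - y else 0 := by
    intro c
    split_ifs with hc
    · simp [hc]
    · ring
  rw [sum_congr rfl fun c _ => hsplit c, sum_add_distrib, ← mul_sum,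
    AddChar.sum_mulShift m (ZMod.isPrimitive_stdAddChar 3), sum_ite_eq', if_pos (mem_univ _),
    ZMod.card]
  split_ifs <;> push_cast <;> ring

lemma mem_dualCode {C : Set (Fin n → ZMod 3)} {x : Fin n → ZMod 3} :
    x ∈ dualCode C ↔ ∀ y ∈ C, x ⬝ᵥ y = 0 := Iff.rfl

def dualAddSubgroup (C : Set (Fin n → ZMod 3)) : AddSubgroup (Fin n → ZMod 3) where
  carrier := dualCode C
  add_mem' ha hb := mem_dualCode.2 fun z hz => by
    rw [add_dotProduct, mem_dualCode.1 ha z hz, mem_dualCode.1 hb z hz, add_zero]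
  zero_mem' := mem_dualCode.2 fun z _ => zero_dotProduct z
  neg_mem' ha := mem_dualCode.2 fun z hz => by
    rw [neg_dotProduct, mem_dualCode.1 ha z hz, neg_zero]

lemma sum_stdAddChar_dotProduct (S : AddSubgroup (Fin n → ZMod 3)) (w : Fin n → ZMod 3) :
    ∑ v with v ∈ S, ZMod.stdAddChar (w ⬝ᵥ v)
      = if w ∈ dualCode (S : Set (Fin n → ZMod 3)) then (#{v | v ∈ S} : ℂ) else 0 := by
  let ψ : AddChar S ℂ := ZMod.stdAddChar.compAddMonoidHom
    ((AddMonoidHom.mk' (w ⬝ᵥ ·) (dotProduct_add w)).comp S.subtype)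
  have hψ : ψ = 0 ↔ w ∈ dualCode (S : Set (Fin n → ZMod 3)) := by
    simp [ψ, AddChar.eq_zero_iff, mem_dualCode,
      ZMod.injective_stdAddChar.eq_iff' (AddChar.map_zero_eq_one _)]
  rw [sum_subtype (p := (· ∈ S)) _ (fun v => by simp), ← Fintype.card_subtype, ← hψ]
  exact AddChar.sum_eq_ite ψ

theorem macWilliams_identity (S : AddSubgroup (Fin n → ZMod 3)) (x y : ℂ) :
    ∑ v with v ∈ S, (x + 2 * y) ^ (n - wt v) * (x - y) ^ wt v
      = #{v | v ∈ S} *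
          ∑ w with w ∈ dualCode (S : Set (Fin n → ZMod 3)), x ^ (n - wt w) * y ^ wt w := by
  have hexpand : ∀ v : Fin n → ZMod 3, (x + 2 * y) ^ (n - wt v) * (x - y) ^ wt v
      = ∑ w, (x ^ (n - wt w) * y ^ wt w) * ZMod.stdAddChar (w ⬝ᵥ v) := by
    intro v
    rw [← prod_ite_eq_zero_eq_pow_wt,
      ← prod_congr rfl fun i _ => sum_stdAddChar_mul_ite (v i) x y, Fintype.prod_sum]
    refine sum_congr rfl fun w _ => ?_
    rw [prod_mul_distrib, prod_ite_eq_zero_eq_pow_wt, dotProduct, AddChar.map_sum_eq_prod,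
      mul_comm]
  simp_rw [hexpand]
  rw [sum_comm]
  simp_rw [← mul_sum, sum_stdAddChar_dotProduct, mul_ite, mul_zero, ← sum_filter, mul_sum,
    mul_comm]

noncomputable def weightDist (C : Set (Fin n → ZMod 3)) (i : ℕ) : ℕ :=
  {x ∈ C | wt x = i}.ncard

lemma weightDist_eq_card (C : Set (Fin n → ZMod 3)) (i : ℕ) :
    weightDist C i = #{v | v ∈ C ∧ wt v = i} := by
  rw [weightDist, Set.ncard_eq_toFinset_card', Set.toFinset_ofPred]

lemma weightDist_zero {C : Set (Fin n → ZMod 3)} (h0 : 0 ∈ C) : weightDist C 0 = 1 := by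
  rw [weightDist, Set.ncard_eq_one]
  refine ⟨0, Set.ext fun x => ⟨fun hx => wt_eq_zero_iff.1 hx.2, ?_⟩⟩
  rintro rfl
  exact ⟨h0, wt_eq_zero_iff.2 rfl⟩

lemma sum_comp_wt_eq_sum_weightDist {C : Set (Fin n → ZMod 3)} (h3 : ∀ v ∈ C, 3 ∣ wt v)
    {M : Type*} [AddCommMonoid M] (F : ℕ → M) :
    ∑ v with v ∈ C, F (wt v)
      = ∑ j ∈ range (n / 3 + 1), weightDist C (3 * j) • F (3 * j) := by
  rw [← sum_fiberwise_of_maps_to (g := fun v => wt v / 3) (t := range (n / 3 + 1))]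
  · refine sum_congr rfl fun j _ => ?_
    rw [filter_filter, weightDist_eq_card, ← sum_const]
    refine sum_congr (filter_congr fun v _ => ?_) fun v hv => ?_
    · refine and_congr_right fun hvC => ?_
      obtain ⟨k, hk⟩ := h3 v hvC
      omega
    · rw [(mem_filter.1 hv).2.2]
  · exact fun v _ => mem_range.2 (Nat.lt_succ_of_le (Nat.div_le_div_right (wt_le v)))

lemma weight_relation_of_macWilliams {K : Type*} [Field K] [CharZero K] (a : ℕ → K)
    (h0 : a 0 = 1)
    (h : ∀ x y : K, ∑ j ∈ range 9, a j * ((x + 2 * y) ^ (24 - 3 * j) * (x - y) ^ (3 * j))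
      = 3 ^ 12 * ∑ j ∈ range 9, a j * (x ^ (24 - 3 * j) * y ^ (3 * j))) :
    a 8 = 48 - 21 * a 1 + a 2 := by
  have h₁ := h 0 1
  have h₂ := h 1 (-1)
  have h₃ := h 1 0
  have h₄ := h 1 2
  have h₅ := h 2 1
  have h₆ := h 3 1
  norm_num [sum_range_succ] at h₁ h₂ h₃ h₄ h₅ h₆
  -- The coefficients are the rational solution of the linear system that writes the target
  -- relation as a combination of the six evaluations.
  linear_combination (-10276790309 / 4738626696700800 : K) * h₁
    - 292111918733 / 53336986986457897632 * h₂ - 3211078121 / 3948855580584 * h₃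
    + 836137 / 118766570212760500800 * h₄ - 127324055 / 6882191869220373888 * h₅
    - 41054219 / 888949783107631627200 * h₆ + 48 * h0

variable {C : Set (Fin n → ZMod 3)}

lemma IsSelfDual.dotProduct_eq_zero (hC : IsSelfDual C) {x y : Fin n → ZMod 3} (hx : x ∈ C)
    (hy : y ∈ C) : x ⬝ᵥ y = 0 :=
  mem_dualCode.1 (hC.symm ▸ hx) y hy

lemma IsSelfDual.zero_mem (hC : IsSelfDual C) : 0 ∈ C :=
  hC ▸ (dualAddSubgroup C).zero_mem

lemma IsSelfDual.three_dvd_wt (hC : IsSelfDual C) {x : Fin n → ZMod 3} (hx : x ∈ C) :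
    3 ∣ wt x :=
  three_dvd_wt_iff.2 (hC.dotProduct_eq_zero hx hx)

theorem IsSelfDual.macWilliams (hC : IsSelfDual C) (x y : ℂ) :
    ∑ v with v ∈ C, (x + 2 * y) ^ (n - wt v) * (x - y) ^ wt v
      = #{v | v ∈ C} * ∑ v with v ∈ C, x ^ (n - wt v) * y ^ wt v := by
  have hS : (dualAddSubgroup C : Set (Fin n → ZMod 3)) = C := hC
  simpa only [← SetLike.mem_coe, hS, show dualCode C = C from hC] using
    macWilliams_identity (dualAddSubgroup C) x y

theorem IsSelfDual.card_sq (hC : IsSelfDual C) : #{v | v ∈ C} ^ 2 = 3 ^ n := by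
  have h := hC.macWilliams 1 1
  rw [sum_eq_single_of_mem 0 (mem_filter.2 ⟨mem_univ _, hC.zero_mem⟩)
    fun v _ hv => by rw [sub_self, zero_pow (wt_eq_zero_iff.not.2 hv), mul_zero]] at h
  norm_num [wt_eq_zero_iff.2 rfl] at h
  exact_mod_cast (sq _).trans h.symm

theorem IsSelfDual.hasMinWeight_three (hC : IsSelfDual C) (h3 : weightDist C 3 ≠ 0) :
    HasMinWeight C 3 := by
  obtain ⟨x, hxC, hx3⟩ := Set.nonempty_of_ncard_ne_zero h3
  refine ⟨⟨x, hxC, fun hx0 => ?_, hx3⟩, fun y hyC hy0 => ?_⟩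
  · rw [wt_eq_zero_iff.2 hx0] at hx3
    exact absurd hx3 (by norm_num)
  · have hdvd := hC.three_dvd_wt hyC
    have hpos := wt_eq_zero_iff.not.2 hy0
    omega

theorem IsSelfDual.weightDist_twentyFour {C : Set (Fin 24 → ZMod 3)} (hC : IsSelfDual C) :
    (weightDist C 24 : ℤ) = 48 - 21 * weightDist C 3 + weightDist C 6 := by
  have hcard : #{v | v ∈ C} = 3 ^ 12 :=
    Nat.pow_left_injective two_ne_zero (hC.card_sq.trans (by norm_num))
  have hrel := weight_relation_of_macWilliams (K := ℂ) (fun j => (weightDist C (3 * j) : ℂ))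
    (by simp [weightDist_zero hC.zero_mem]) fun x y => by
      have h := hC.macWilliams x y
      rw [hcard, sum_comp_wt_eq_sum_weightDist (fun _ => hC.three_dvd_wt)
          (fun i => (x + 2 * y) ^ (24 - i) * (x - y) ^ i),
        sum_comp_wt_eq_sum_weightDist (fun _ => hC.three_dvd_wt)
          (fun i => x ^ (24 - i) * y ^ i)] at h
      simpa only [nsmul_eq_mul, Nat.cast_pow, Nat.cast_ofNat] using h
  norm_num at hrel
  exact_mod_cast hrel

end

/-- Every ternary self-dual code of length 24 satisfies
`β₂₄ = 48 - 21β₃ + β₆`; consequently, if `C` has no codeword of weight 24,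
then `C` has minimum weight 3. -/
theorem weight_24_count_and_min_weight (C : Set (Fin 24 → ZMod 3))
    (hC : IsSelfDual C) :
    (({x ∈ C | wt x = 24}.ncard : ℤ)
        = 48 - 21 * ({x ∈ C | wt x = 3}.ncard : ℤ)
            + ({x ∈ C | wt x = 6}.ncard : ℤ)) ∧
    ((∀ x ∈ C, wt x < 24) → HasMinWeight C 3) := by
  refine ⟨hC.weightDist_twentyFour, fun h24 => hC.hasMinWeight_three ?_⟩
  have hnone : weightDist C 24 = 0 :=
    (Set.ncard_eq_zero).2 (Set.eq_empty_of_forall_notMem fun x hx => (h24 x hx.1).ne hx.2)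
  have hrel := hC.weightDist_twentyFour
  omega

end Ternary
end
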